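/- Let G be a graph and E₋ a minimum set of edges such that G − E₋ is a pseudo-split graph, and assume the minimum pseudo-split edge deletion number of G is strictly smaller than its minimum split edge deletion number. Let C ⊎ I ⊎ S be the pseudo-split partition of G − E₋ with S nonempty. Then the subgraph of G induced by S is a C₅ (no edge of E₋ lies inside S), and no vertex of I forms a triangle in G with two vertices of S. -/

import Mathlib

open scoped Classical

def IsClusterGraph {W : Type*} (H : SimpleGraph W) : Prop :=
  ∀ ⦃u v w : W⦄, H.Adj u v → H.Adj v w → u ≠ w → H.Adj u w

def closedNbhd {W : Type*} (G : SimpleGraph W) (v : W) : Set W :=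
  insert v (G.neighborSet v)

noncomputable def cut {W : Type*} (G : SimpleGraph W) (U : Set W) : ℕ :=
  {e ∈ G.edgeSet | ∃ a ∈ U, ∃ b ∉ U, e = s(a, b)}.ncard

noncomputable def clusterDelNum {W : Type*} (G : SimpleGraph W) : ℕ :=
  sInf {n | ∃ E ⊆ G.edgeSet, E.ncard = n ∧ IsClusterGraph (G.deleteEdges E)}

def IsSTCSolution {W : Type*} (G : SimpleGraph W) (E : Set (Sym2 W)) : Prop :=
  E ⊆ G.edgeSet ∧
    ∀ ⦃u w x : W⦄, (G.deleteEdges E).Adj u w → (G.deleteEdges E).Adj w x → u ≠ x →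
      ¬(G.deleteEdges E).Adj u x → G.Adj u x

noncomputable def stcNum {W : Type*} (G : SimpleGraph W) : ℕ :=
  sInf {n | ∃ E : Set (Sym2 W), IsSTCSolution G E ∧ E.ncard = n}

def P4At {W : Type*} (H : SimpleGraph W) (a b c d : W) : Prop :=
  a ≠ b ∧ a ≠ c ∧ a ≠ d ∧ b ≠ c ∧ b ≠ d ∧ c ≠ d ∧
    H.Adj a b ∧ H.Adj b c ∧ H.Adj c d ∧ ¬H.Adj a c ∧ ¬H.Adj b d ∧ ¬H.Adj a d

def C4At {W : Type*} (H : SimpleGraph W) (a b c d : W) : Prop :=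
  a ≠ b ∧ a ≠ c ∧ a ≠ d ∧ b ≠ c ∧ b ≠ d ∧ c ≠ d ∧
    H.Adj a b ∧ H.Adj b c ∧ H.Adj c d ∧ H.Adj d a ∧ ¬H.Adj a c ∧ ¬H.Adj b d

def TwoK2At {W : Type*} (H : SimpleGraph W) (a b c d : W) : Prop :=
  a ≠ b ∧ a ≠ c ∧ a ≠ d ∧ b ≠ c ∧ b ≠ d ∧ c ≠ d ∧
    H.Adj a b ∧ H.Adj c d ∧ ¬H.Adj a c ∧ ¬H.Adj a d ∧ ¬H.Adj b c ∧ ¬H.Adj b d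

def C5At {W : Type*} (H : SimpleGraph W) (a b c d e : W) : Prop :=
  a ≠ b ∧ a ≠ c ∧ a ≠ d ∧ a ≠ e ∧ b ≠ c ∧ b ≠ d ∧ b ≠ e ∧ c ≠ d ∧ c ≠ e ∧ d ≠ e ∧
    H.Adj a b ∧ H.Adj b c ∧ H.Adj c d ∧ H.Adj d e ∧ H.Adj e a ∧
    ¬H.Adj a c ∧ ¬H.Adj a d ∧ ¬H.Adj b d ∧ ¬H.Adj b e ∧ ¬H.Adj c e

def IsTriviallyPerfect {W : Type*} (H : SimpleGraph W) : Prop :=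
  (¬∃ a b c d, P4At H a b c d) ∧ (¬∃ a b c d, C4At H a b c d)

def IsIndep {W : Type*} (H : SimpleGraph W) (s : Set W) : Prop :=
  s.Pairwise fun a b => ¬H.Adj a b

def IsSplit {W : Type*} (H : SimpleGraph W) : Prop :=
  ∃ C : Set W, H.IsClique C ∧ IsIndep H Cᶜ

def IsPseudoSplit {W : Type*} (H : SimpleGraph W) : Prop :=
  (¬∃ a b c d, TwoK2At H a b c d) ∧ (¬∃ a b c d, C4At H a b c d)

noncomputable def sedNum {W : Type*} (G : SimpleGraph W) : ℕ :=
  sInf {n | ∃ E ⊆ G.edgeSet, E.ncard = n ∧ IsSplit (G.deleteEdges E)}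

noncomputable def psdNum {W : Type*} (G : SimpleGraph W) : ℕ :=
  sInf {n | ∃ E ⊆ G.edgeSet, E.ncard = n ∧ IsPseudoSplit (G.deleteEdges E)}

def IsTPCompletion {W : Type*} (G Gh : SimpleGraph W) : Prop :=
  G ≤ Gh ∧ IsTriviallyPerfect Gh

def IsMinimalTPCompletion {W : Type*} (G Gh : SimpleGraph W) : Prop :=
  IsTPCompletion G Gh ∧
    ∀ G' : SimpleGraph W, G ≤ G' → G' ≤ Gh → IsTriviallyPerfect G' → G' = Gh

noncomputable def tpcNum {W : Type*} (G : SimpleGraph W) : ℕ :=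
  sInf {n | ∃ Gh : SimpleGraph W, IsTPCompletion G Gh ∧ (Gh.edgeSet \ G.edgeSet).ncard = n}

def IsMinTPCompletion {W : Type*} (G Gh : SimpleGraph W) : Prop :=
  IsTPCompletion G Gh ∧
    ∀ G' : SimpleGraph W, IsTPCompletion G G' →
      (Gh.edgeSet \ G.edgeSet).ncard ≤ (G'.edgeSet \ G.edgeSet).ncard

def IsModule {W : Type*} (G : SimpleGraph W) (M : Set W) : Prop :=
  ∀ a ∈ M, ∀ b ∈ M, ∀ x ∉ M, (G.Adj a x ↔ G.Adj b x)

/-! Both claims come from one exchange argument. For a clique `K` of `G`, deleting the edges of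
`G` that avoid `K` leaves a split graph, so `sedNum G` is at most the number of those edges; this is
at most `|E|` as soon as `E` has at least as many edges meeting `K` as `G - E` has edges avoiding
`K`. A chord `ac` of the `C₅` `abcde` lying in `E` makes `K = C ∪ {a, b, c}` such a clique (pay
`de`, regain `ac`); a vertex `u ∈ I` adjacent in `G` to consecutive `a, b` makes `K = C ∪ {a, b}`
one (pay `cd, de`, regain `ua, ub`). Either way `sedNum G ≤ |E| = psdNum G`. -/

namespace SimpleGraph

variable {V : Type*} {H : SimpleGraph V}

lemma edgeSet_inter_sym2_pair_subset (x y : V) :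
    H.edgeSet ∩ ({x, y} : Set V).sym2 ⊆ {s(x, y)} := by
  rintro ⟨v, w⟩ ⟨hvw, hv, hw⟩
  simp only [Set.mem_insert_iff, Set.mem_singleton_iff] at hv hw
  rcases hv with rfl | rfl <;> rcases hw with rfl | rfl
  all_goals first | exact absurd hvw (H.irrefl) | simp [Sym2.eq_swap]

lemma edgeSet_inter_sym2_triple_subset {x y z : V} (hxz : ¬H.Adj x z) :
    H.edgeSet ∩ ({x, y, z} : Set V).sym2 ⊆ {s(x, y), s(y, z)} := by
  rintro ⟨v, w⟩ ⟨hvw, hv, hw⟩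
  simp only [Set.mem_insert_iff, Set.mem_singleton_iff] at hv hw
  rcases hv with rfl | rfl | rfl <;> rcases hw with rfl | rfl | rfl
  all_goals
    first
    | exact absurd hvw (H.irrefl)
    | exact absurd hvw hxz
    | exact absurd hvw.symm hxz
    | simp [Sym2.eq_swap]

end SimpleGraph

section SplitDeletion

open SimpleGraph

variable {V : Type*} {G : SimpleGraph V} {E : Set (Sym2 V)} {K : Set V}

lemma isSplit_deleteEdges_inter_sym2_compl (hK : G.IsClique K) :
    IsSplit (G.deleteEdges (G.edgeSet ∩ Kᶜ.sym2)) := by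
  refine ⟨K, fun x hx y hy hxy => ?_, fun x hx y hy _ hadj => ?_⟩
  · simp [hK hx hy hxy, hx]
  · simp_all

lemma sedNum_le_ncard_inter_sym2_compl [Finite V] (hK : G.IsClique K) :
    sedNum G ≤ (G.edgeSet ∩ Kᶜ.sym2).ncard :=
  Nat.sInf_le ⟨_, Set.inter_subset_left, rfl, isSplit_deleteEdges_inter_sym2_compl hK⟩

lemma sedNum_le_ncard_of_exchange [Finite V] (hE : E ⊆ G.edgeSet) (hK : G.IsClique K)
    (h : ((G.deleteEdges E).edgeSet ∩ Kᶜ.sym2).ncard ≤ (E \ Kᶜ.sym2).ncard) :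
    sedNum G ≤ E.ncard := by
  refine (sedNum_le_ncard_inter_sym2_compl hK).trans ?_
  rw [Set.ncard_le_ncard_iff_ncard_sdiff_le_ncard_sdiff]
  have hin : (G.edgeSet ∩ Kᶜ.sym2) \ E = (G.deleteEdges E).edgeSet ∩ Kᶜ.sym2 := by
    rw [edgeSet_deleteEdges, Set.inter_sdiff_right_comm]
  have hout : E \ (G.edgeSet ∩ Kᶜ.sym2) = E \ Kᶜ.sym2 := by
    rw [Set.sdiff_inter, Set.sdiff_eq_empty.mpr hE, Set.empty_union]
  rwa [hin, hout]

lemma ncard_le_psdNum (hE : E ⊆ G.edgeSet) (hps : IsPseudoSplit (G.deleteEdges E))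
    (hmin : ∀ E' ⊆ G.edgeSet, IsPseudoSplit (G.deleteEdges E') → E.ncard ≤ E'.ncard) :
    E.ncard ≤ psdNum G := by
  obtain ⟨E₀, hE₀, hcard, hps₀⟩ := Nat.sInf_mem (⟨_, E, hE, rfl, hps⟩ :
    {n | ∃ E ⊆ G.edgeSet, E.ncard = n ∧ IsPseudoSplit (G.deleteEdges E)}.Nonempty)
  exact (hmin E₀ hE₀ hps₀).trans_eq hcard

end SplitDeletion

section PseudoSplit

open SimpleGraph

variable {V : Type*} {G H : SimpleGraph V} {E : Set (Sym2 V)} {C I S T R : Set V}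
  {a b c d e : V}

structure IsPseudoSplitCover (H : SimpleGraph V) (C I S : Set V) : Prop where
  cover : C ∪ I ∪ S = Set.univ
  isClique : H.IsClique C
  isIndep : IsIndep H I
  complete : ∀ x ∈ S, ∀ y ∈ C, H.Adj x y
  anticomplete : ∀ x ∈ S, ∀ y ∈ I, ¬H.Adj x y

namespace IsPseudoSplitCover

lemma isClique_union (hP : IsPseudoSplitCover H C I S) (hHG : H ≤ G) (hTS : T ⊆ S)
    (hT : G.IsClique T) : G.IsClique (C ∪ T) :=
  have := G.symm
  Set.pairwise_union_of_symm.mpr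
    ⟨hP.isClique.mono hHG, hT, fun x hx y hy _ => hHG (hP.complete y (hTS hy) x hx).symm⟩

lemma edgeSet_inter_sym2_compl_subset (hP : IsPseudoSplitCover H C I S) (hS : S ⊆ T ∪ R) :
    H.edgeSet ∩ (C ∪ T)ᶜ.sym2 ⊆ R.sym2 := by
  have side : ∀ v ∈ (C ∪ T)ᶜ, v ∈ I ∨ v ∈ S ∧ v ∈ R := by
    intro v hv
    simp only [Set.mem_compl_iff, Set.mem_union, not_or] at hv
    have hv' : v ∈ C ∪ I ∪ S := hP.cover ▸ Set.mem_univ v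
    rcases hv' with (hC | hI) | hS'
    · exact absurd hC hv.1
    · exact Or.inl hI
    · exact Or.inr ⟨hS', (hS hS').resolve_left hv.2⟩
  rintro ⟨v, w⟩ ⟨hvw, hv, hw⟩
  rcases side v hv with hvI | ⟨hvS, hvR⟩
  · rcases side w hw with hwI | ⟨hwS, -⟩
    · exact absurd hvw (hP.isIndep hvI hwI (H.ne_of_adj hvw))
    · exact absurd hvw.symm (hP.anticomplete w hwS v hvI)
  · rcases side w hw with hwI | ⟨-, hwR⟩
    · exact absurd hvw (hP.anticomplete v hvS w hwI)
    · exact ⟨hvR, hwR⟩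

lemma rotate (hP : IsPseudoSplitCover H C I {a, b, c, d, e}) :
    IsPseudoSplitCover H C I {b, c, d, e, a} := by
  have hrot : ({b, c, d, e, a} : Set V) = {a, b, c, d, e} := by
    ext; simp only [Set.mem_insert_iff, Set.mem_singleton_iff]; tauto
  exact hrot ▸ hP

end IsPseudoSplitCover

lemma C5At.rotate (h : C5At H a b c d e) : C5At H b c d e a := by
  obtain ⟨n1, n2, n3, n4, n5, n6, n7, n8, n9, n10, e1, e2, e3, e4, e5, m1, m2, m3, m4, m5⟩ := h
  exact ⟨n5, n6, n7, n1.symm, n8, n9, n2.symm, n10, n3.symm, n4.symm, e2, e3, e4, e5, e1,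
    m3, m4, m5, fun h => m1 h.symm, fun h => m2 h.symm⟩

variable [Finite V]

lemma sedNum_le_ncard_of_chord_mem (hE : E ⊆ G.edgeSet)
    (hP : IsPseudoSplitCover (G.deleteEdges E) C I {a, b, c, d, e})
    (h5 : C5At (G.deleteEdges E) a b c d e) (hac : s(a, c) ∈ E) : sedNum G ≤ E.ncard := by
  obtain ⟨-, -, -, -, -, -, -, -, -, -, hadjab, hadjbc, -⟩ := h5
  have hT : G.IsClique {a, b, c} := by
    simp only [isClique_insert, Set.mem_insert_iff, Set.mem_singleton_iff, forall_eq_or_imp,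
      forall_eq, isClique_singleton, true_and]
    exact ⟨fun _ => hadjbc.1, fun _ => hadjab.1, fun _ => hE hac⟩
  have hK := hP.isClique_union (deleteEdges_le E) (by intro; simp; tauto) hT
  refine sedNum_le_ncard_of_exchange hE hK ?_
  calc _ ≤ ({s(d, e)} : Set (Sym2 V)).ncard :=
        Set.ncard_le_ncard (Set.subset_inter Set.inter_subset_left
          (hP.edgeSet_inter_sym2_compl_subset (R := {d, e}) (by intro; simp; tauto))
          |>.trans (edgeSet_inter_sym2_pair_subset d e))
    _ = ({s(a, c)} : Set (Sym2 V)).ncard := by simp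
    _ ≤ (E \ (C ∪ {a, b, c})ᶜ.sym2).ncard :=
        Set.ncard_le_ncard (Set.singleton_subset_iff.mpr ⟨hac, fun h => h.1 (by simp)⟩)

lemma sedNum_le_ncard_of_triangle (hE : E ⊆ G.edgeSet)
    (hP : IsPseudoSplitCover (G.deleteEdges E) C I {a, b, c, d, e})
    (h5 : C5At (G.deleteEdges E) a b c d e) {u : V} (hu : u ∈ I) (hua : G.Adj u a)
    (hub : G.Adj u b) : sedNum G ≤ E.ncard := by
  obtain ⟨hab, -, -, -, -, -, -, -, -, -, hadjab, -, -, -, -, -, -, -, -, hce⟩ := h5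
  have hK := hP.isClique_union (deleteEdges_le E) (by intro; simp; tauto)
    (isClique_pair.mpr fun _ => hadjab.1)
  have hmem : ∀ x ∈ ({a, b} : Set V), G.Adj u x → s(u, x) ∈ E \ (C ∪ {a, b})ᶜ.sym2 :=
    fun x hx hux => ⟨by_contra fun h => hP.anticomplete x (by simp at hx ⊢; tauto) u hu
      (deleteEdges_adj.mpr ⟨hux.symm, by rwa [Sym2.eq_swap]⟩), fun h => h.2 (Or.inr hx)⟩
  refine sedNum_le_ncard_of_exchange hE hK ?_
  calc _ ≤ ({s(c, d), s(d, e)} : Set (Sym2 V)).ncard :=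
        Set.ncard_le_ncard (Set.subset_inter Set.inter_subset_left
          (hP.edgeSet_inter_sym2_compl_subset (R := {c, d, e}) (by intro; simp; tauto))
          |>.trans (edgeSet_inter_sym2_triple_subset hce))
    _ ≤ 2 := (Set.ncard_insert_le _ _).trans (by simp)
    _ = ({s(u, a), s(u, b)} : Set (Sym2 V)).ncard :=
        (Set.ncard_pair (Sym2.congr_right.not.mpr hab)).symm
    _ ≤ (E \ (C ∪ {a, b})ᶜ.sym2).ncard :=
        Set.ncard_le_ncard (Set.pair_subset (hmem a (by simp) hua) (hmem b (by simp) hub))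

lemma forall_notMem_of_C5At (hE : E ⊆ G.edgeSet)
    (hP : IsPseudoSplitCover (G.deleteEdges E) C I {a, b, c, d, e})
    (h5 : C5At (G.deleteEdges E) a b c d e) (hsed : E.ncard < sedNum G) :
    ∀ x ∈ ({a, b, c, d, e} : Set V), ∀ y ∈ ({a, b, c, d, e} : Set V), s(x, y) ∉ E := by
  have chord : ∀ ⦃a b c d e : V⦄, IsPseudoSplitCover (G.deleteEdges E) C I {a, b, c, d, e} →
      C5At (G.deleteEdges E) a b c d e → s(a, c) ∉ E :=
    fun _ _ _ _ _ hP h5 h => (sedNum_le_ncard_of_chord_mem hE hP h5 h).not_gt hsed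
  have := chord hP h5
  have := chord hP.rotate h5.rotate
  have := chord hP.rotate.rotate h5.rotate.rotate
  have := chord hP.rotate.rotate.rotate h5.rotate.rotate.rotate
  have := chord hP.rotate.rotate.rotate.rotate h5.rotate.rotate.rotate.rotate
  obtain ⟨-, -, -, -, -, -, -, -, -, -, _, _, _, _, _, -⟩ := h5
  intro x hx y hy
  simp only [Set.mem_insert_iff, Set.mem_singleton_iff] at hx hy
  rcases hx with rfl | rfl | rfl | rfl | rfl <;> rcases hy with rfl | rfl | rfl | rfl | rfl
  all_goals
    first
    | exact fun h => G.irrefl (hE h)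
    | exact (deleteEdges_adj.mp (by assumption)).2
    | assumption
    | rw [Sym2.eq_swap]
      first
      | exact (deleteEdges_adj.mp (by assumption)).2
      | assumption

lemma not_exists_triangle_of_C5At (hE : E ⊆ G.edgeSet)
    (hP : IsPseudoSplitCover (G.deleteEdges E) C I {a, b, c, d, e})
    (h5 : C5At (G.deleteEdges E) a b c d e) (hsed : E.ncard < sedNum G) :
    ¬∃ u ∈ I, ∃ x ∈ ({a, b, c, d, e} : Set V), ∃ y ∈ ({a, b, c, d, e} : Set V),
      G.Adj u x ∧ G.Adj u y ∧ G.Adj x y := by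
  rintro ⟨u, hu, x, hx, y, hy, hux, huy, hxy⟩
  have hxy' : (G.deleteEdges E).Adj x y :=
    deleteEdges_adj.mpr ⟨hxy, forall_notMem_of_C5At hE hP h5 hsed x hx y hy⟩
  have triangle : ∀ ⦃a b c d e : V⦄, IsPseudoSplitCover (G.deleteEdges E) C I {a, b, c, d, e} →
      C5At (G.deleteEdges E) a b c d e → G.Adj u a → G.Adj u b → False :=
    fun _ _ _ _ _ hP h5 hua hub => (sedNum_le_ncard_of_triangle hE hP h5 hu hua hub).not_gt hsed
  have := triangle hP h5
  have := triangle hP.rotate h5.rotate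
  have := triangle hP.rotate.rotate h5.rotate.rotate
  have := triangle hP.rotate.rotate.rotate h5.rotate.rotate.rotate
  have := triangle hP.rotate.rotate.rotate.rotate h5.rotate.rotate.rotate.rotate
  obtain ⟨-, -, -, -, -, -, -, -, -, -, -, -, -, -, -, _, _, _, _, _⟩ := h5
  simp only [Set.mem_insert_iff, Set.mem_singleton_iff] at hx hy
  rcases hx with rfl | rfl | rfl | rfl | rfl <;> rcases hy with rfl | rfl | rfl | rfl | rfl
  all_goals
    first
    | exact (G.deleteEdges E).irrefl hxy'
    | exact absurd hxy' ‹_›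
    | exact absurd hxy'.symm ‹_›
    | exact (‹_› : G.Adj u _ → G.Adj u _ → False) hux huy
    | exact (‹_› : G.Adj u _ → G.Adj u _ → False) huy hux

end PseudoSplit

theorem stmt18_general {V : Type*} [Fintype V] (G : SimpleGraph V) (E : Set (Sym2 V))
    (hE : E ⊆ G.edgeSet) (hps : IsPseudoSplit (G.deleteEdges E))
    (hmin : ∀ E' ⊆ G.edgeSet, IsPseudoSplit (G.deleteEdges E') → E.ncard ≤ E'.ncard)
    (hlt : psdNum G < sedNum G)
    (C I S : Set V)
    (hunion : C ∪ I ∪ S = Set.univ)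
    (hC : (G.deleteEdges E).IsClique C) (hI : IsIndep (G.deleteEdges E) I)
    (hS : ∃ a b c d e : V, S = {a, b, c, d, e} ∧ C5At (G.deleteEdges E) a b c d e)
    (hSC : ∀ x ∈ S, ∀ y ∈ C, (G.deleteEdges E).Adj x y)
    (hSI : ∀ x ∈ S, ∀ y ∈ I, ¬(G.deleteEdges E).Adj x y) :
    (∀ x ∈ S, ∀ y ∈ S, s(x, y) ∉ E) ∧
      ¬∃ u ∈ I, ∃ x ∈ S, ∃ y ∈ S, G.Adj u x ∧ G.Adj u y ∧ G.Adj x y := by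
  obtain ⟨a, b, c, d, e, rfl, h5⟩ := hS
  have hP : IsPseudoSplitCover (G.deleteEdges E) C I {a, b, c, d, e} := ⟨hunion, hC, hI, hSC, hSI⟩
  have hsed : E.ncard < sedNum G := (ncard_le_psdNum hE hps hmin).trans_lt hlt
  exact ⟨forall_notMem_of_C5At hE hP h5 hsed, not_exists_triangle_of_C5At hE hP h5 hsed⟩

theorem stmt18 {V : Type*} [Fintype V] (G : SimpleGraph V) (E : Set (Sym2 V))
    (hE : E ⊆ G.edgeSet) (hps : IsPseudoSplit (G.deleteEdges E))
    (hmin : ∀ E' ⊆ G.edgeSet, IsPseudoSplit (G.deleteEdges E') → E.ncard ≤ E'.ncard)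
    (hlt : psdNum G < sedNum G)
    (C I S : Set V)
    (hunion : C ∪ I ∪ S = Set.univ)
    (hCI : Disjoint C I) (hCS : Disjoint C S) (hIS : Disjoint I S)
    (hC : (G.deleteEdges E).IsClique C) (hI : IsIndep (G.deleteEdges E) I)
    (hS : ∃ a b c d e : V, S = {a, b, c, d, e} ∧ C5At (G.deleteEdges E) a b c d e)
    (hSC : ∀ x ∈ S, ∀ y ∈ C, (G.deleteEdges E).Adj x y)
    (hSI : ∀ x ∈ S, ∀ y ∈ I, ¬(G.deleteEdges E).Adj x y) :
    (∀ x ∈ S, ∀ y ∈ S, s(x, y) ∉ E) ∧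
      ¬∃ u ∈ I, ∃ x ∈ S, ∃ y ∈ S, G.Adj u x ∧ G.Adj u y ∧ G.Adj x y :=
  stmt18_general G E hE hps hmin hlt C I S hunion hC hI hS hSC hSI
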